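/- arXiv:2305.00554 — 4 statements merged into one kernel-verified Lean document; each statement's English description precedes it below -/
import Mathlib

section
/- In the game Γ₀ without collusion, if every node's deviation reward satisfies R_{d,i} < R_{h,i}, every node's power satisfies v_i ≤ t, and t ≥ 1/2, then the strategy profile where all nodes play the honest strategy S_h is a strict Nash equilibrium: any single node i deviating to S_m receives strictly less utility than R_{h,i}. -/
open Finset

/-- Total power of nodes playing the honest strategy `S_h` (encoded as `true`). -/
noncomputable def Vh {n : ℕ} (v : Fin n → ℝ) (s : Fin n → Bool) : ℝ :=
  ∑ j, if s j then v j else 0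

/-- Utility in game Γ₀ (no collusion): `true` = `S_h`, `false` = `S_m`. -/
noncomputable def util0 {n : ℕ} (v Rh Rd Rd' Rm : Fin n → ℝ) (t : ℝ)
    (s : Fin n → Bool) (i : Fin n) : ℝ :=
  if s i then
    (if t < Vh v s then Rh i else if t < 1 - Vh v s then Rd' i else 0)
  else
    (if t < Vh v s then Rd i else if t < 1 - Vh v s then Rm i else 0)

/-- Theorem 1 (Γ₀): all-honest is a strict Nash equilibrium. -/
theorem allHonest_strictNash_game0
    (n : ℕ) (v Rh Rd Rd' Rm : Fin n → ℝ) (t : ℝ)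
    (ht : 1 / 2 ≤ t)
    (hv : ∀ i, 0 < v i) (hsum : ∑ i, v i = 1) (hvt : ∀ i, v i ≤ t)
    (hRd : ∀ i, Rd i < Rh i) (hRh : ∀ i, 0 < Rh i)
    (hRm : ∀ i, Rh i < Rm i) (hRd' : ∀ i, Rd' i < Rm i)
    (i : Fin n) :
    util0 v Rh Rd Rd' Rm t (Function.update (fun _ => true) i false) i < Rh i := by
  have hV : Vh v (Function.update (fun _ => true) i false) = 1 - v i := by
    have : ∀ j, (if (Function.update (fun _ => true) i false) j then v j else 0)
        = Function.update v i 0 j := by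
      intro j
      by_cases h : j = i <;> simp [Function.update, h]
    unfold Vh
    rw [Finset.sum_congr rfl (fun j _ => this j),
      Finset.sum_update_of_mem (Finset.mem_univ i), zero_add,
      Finset.sum_sdiff_eq_sub (Finset.subset_univ {i}), Finset.sum_singleton, hsum]
  unfold util0
  rw [hV]
  simp only [Function.update_self, if_false, Bool.false_eq_true]
  have h1 : ¬ t < 1 - (1 - v i) := by
    have := hvt i; linarith
  rw [if_neg h1]
  by_cases h2 : t < 1 - v i
  · rw [if_pos h2]; exact hRd i
  · rw [if_neg h2]; exact hRh i
end

section
/- In the game Γ₁, the all-S'_m profile is a strict Nash equilibrium: if all nodes play S'_m and a single node i deviates to S_h, then i receives either R_{d',i} (when v_i < 1 − t) or R_{h,i} (when v_i ≥ 1 − t), both strictly less than its equilibrium payoff R_{m,i}. -/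
open Finset

/-- Utility in game Γ₁ (with the bribery smart contract): `true` = `S_h`, `false` = `S'_m`. -/
noncomputable def util1 {n : ℕ} (v Rh Rd' Rm : Fin n → ℝ) (t : ℝ)
    (s : Fin n → Bool) (i : Fin n) : ℝ :=
  if s i then
    (if t < Vh v s then Rh i else if t < 1 - Vh v s then Rd' i else Rh i)
  else
    (if t < Vh v s then Rh i else if t < 1 - Vh v s then Rm i else Rh i)

/-- Theorem 4 (Γ₁): all-`S'_m` is a strict Nash equilibrium: a unilateral deviation
to `S_h` yields `Rd'` (if `v i < 1 - t`) or `Rh` (if `v i ≥ 1 - t`), both `< Rm i`. -/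
theorem allCollusion_strictNash_game1
    (n : ℕ) (v Rh Rd' Rm : Fin n → ℝ) (t : ℝ)
    (ht : 1 / 2 ≤ t)
    (hv : ∀ i, 0 < v i) (hsum : ∑ i, v i = 1)
    (hRh : ∀ i, 0 < Rh i) (hRm : ∀ i, Rh i < Rm i) (hRd' : ∀ i, Rd' i < Rm i)
    (i : Fin n) :
    util1 v Rh Rd' Rm t (Function.update (fun _ => false) i true) i < Rm i ∧
    (v i < 1 - t →
      util1 v Rh Rd' Rm t (Function.update (fun _ => false) i true) i = Rd' i) ∧
    (1 - t ≤ v i →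
      util1 v Rh Rd' Rm t (Function.update (fun _ => false) i true) i = Rh i) := by
  have hV : Vh v (Function.update (fun _ => false) i true) = v i := by
    simp [Vh, Function.update, Finset.sum_ite_eq']
  simp only [util1, hV, Function.update_self, if_pos]
  refine ⟨?_, ?_, ?_⟩
  · split_ifs with h1 h2
    · exact hRm i
    · exact hRd' i
    · exact hRm i
  · intro h
    rw [if_neg (by linarith), if_pos (by linarith)]
  · intro h
    split_ifs with h1 h2
    · rfl
    · linarith
    · rfl
end

section
/- In the game Γ₁, there exists a finite sequence of strategy profiles starting from all-S_h and ending at all-S'_m such that each profile is obtained from the previous one by a single node switching from S_h to S'_m, and at each switch the switching node's utility does not decrease; moreover, once the cumulative power of switched nodes exceeds t, each subsequent switcher strictly increases its utility. -/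
open Finset

/-- In Γ₁ there is a finite sequence of single-node switches from all-`S_h` to
all-`S'_m` in which no switcher ever loses, and every switcher strictly gains
once the power of `S'_m`-players exceeds `t`. -/
theorem deviation_sequence_game1
    (n : ℕ) (v Rh Rd' Rm : Fin n → ℝ) (t : ℝ)
    (ht : 1 / 2 ≤ t)
    (hv : ∀ i, 0 < v i) (hsum : ∑ i, v i = 1) (hvt : ∀ i, v i ≤ t)
    (hRh : ∀ i, 0 < Rh i) (hRm : ∀ i, Rh i < Rm i) (hRd' : ∀ i, Rd' i < Rm i) :
    ∃ P : Fin (n + 1) → Fin n → Bool,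
      P 0 = (fun _ => true) ∧
      P (Fin.last n) = (fun _ => false) ∧
      ∀ k : Fin n, ∃ i : Fin n,
        P k.castSucc i = true ∧
        P k.succ = Function.update (P k.castSucc) i false ∧
        util1 v Rh Rd' Rm t (P k.castSucc) i ≤ util1 v Rh Rd' Rm t (P k.succ) i ∧
        (t < 1 - Vh v (P k.succ) →
          util1 v Rh Rd' Rm t (P k.castSucc) i < util1 v Rh Rd' Rm t (P k.succ) i) := by
  classical
  refine ⟨fun k i => decide (k.val ≤ i.val), ?_, ?_, ?_⟩
  · funext i; simp
  · funext i; simp [Fin.last]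
  · intro k
    have hold : (fun i : Fin n => decide ((k.castSucc : Fin (n+1)).val ≤ i.val)) k = true := by
      simp
    have hupd : (fun i : Fin n => decide ((k.succ : Fin (n+1)).val ≤ i.val)) =
        Function.update (fun i : Fin n => decide ((k.castSucc : Fin (n+1)).val ≤ i.val)) k false := by
      funext j
      rcases eq_or_ne j k with rfl | hne
      · simp
      · rw [Function.update_of_ne hne]
        have : j.val ≠ k.val := fun h => hne (Fin.ext h)
        simp only [Fin.val_succ, Fin.coe_castSucc, decide_eq_decide]
        omega
    refine ⟨k, hold, hupd, ?_⟩
    set sold : Fin n → Bool := fun i => decide ((k.castSucc : Fin (n+1)).val ≤ i.val) with hsold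
    set snew : Fin n → Bool := fun i => decide ((k.succ : Fin (n+1)).val ≤ i.val) with hsnew
    have hba : Vh v snew ≤ Vh v sold := by
      unfold Vh
      apply Finset.sum_le_sum
      intro j _
      by_cases h1 : snew j = true
      · have h2 : sold j = true := by
          simp only [hsnew, hsold, decide_eq_true_eq, Fin.val_succ, Fin.coe_castSucc] at h1 ⊢
          omega
        rw [h1, h2]
      · simp only [Bool.not_eq_true] at h1
        rw [h1]
        by_cases h2 : sold j
        · rw [h2]; simp [le_of_lt (hv j)]
        · simp only [Bool.not_eq_true] at h2; rw [h2]
    have hnewk : snew k = false := by simp [hsnew]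
    have uold : util1 v Rh Rd' Rm t sold k =
        (if t < Vh v sold then Rh k else if t < 1 - Vh v sold then Rd' k else Rh k) := by
      unfold util1; rw [hold]; simp
    have unew : util1 v Rh Rd' Rm t snew k =
        (if t < Vh v snew then Rh k else if t < 1 - Vh v snew then Rm k else Rh k) := by
      unfold util1; rw [hnewk]; simp only [Bool.false_eq_true, if_false]
    rw [uold, unew]
    by_cases h1 : t < Vh v snew
    · have h2 : t < Vh v sold := lt_of_lt_of_le h1 hba
      rw [if_pos h1, if_pos h2]
      refine ⟨le_refl _, fun h => absurd (show t < 1 - Vh v snew from h) (by linarith)⟩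
    · rw [if_neg h1]
      by_cases h3 : t < 1 - Vh v snew
      · rw [if_pos h3]
        have hb : (if t < Vh v sold then Rh k else if t < 1 - Vh v sold then Rd' k else Rh k) < Rm k := by
          split
          · exact hRm k
          · split
            · exact hRd' k
            · exact hRm k
        exact ⟨le_of_lt hb, fun _ => hb⟩
      · rw [if_neg h3]
        have h4 : ¬ t < 1 - Vh v sold := by
          intro h; apply h3; linarith
        constructor
        · by_cases h5 : t < Vh v sold
          · rw [if_pos h5]
          · rw [if_neg h5, if_neg h4]
        · intro h; exact absurd h h3
end

section
/- In the game Γ₀ with t ≥ 1/2 and all v_i ≤ t, if a single node i deviates from the all-S_h profile, then either the remaining honest power 1 − v_i still exceeds t (and i earns R_{d,i} < R_{h,i}), or both V_h ≤ t and V_m ≤ t after the deviation (and i earns 0 < R_{h,i}); in both cases the deviation strictly decreases i's utility. -/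
open Finset

/-- In Γ₀, a unilateral deviation from all-`S_h` either leaves honest power above `t`
(the deviator earns `Rd i < Rh i`) or pushes both sides below `t` (the deviator
earns `0 < Rh i`); in both cases the deviation strictly decreases the utility. -/
theorem single_deviation_cases_game0
    (n : ℕ) (v Rh Rd Rd' Rm : Fin n → ℝ) (t : ℝ)
    (ht : 1 / 2 ≤ t)
    (hv : ∀ i, 0 < v i) (hsum : ∑ i, v i = 1) (hvt : ∀ i, v i ≤ t)
    (hRd : ∀ i, Rd i < Rh i) (hRh : ∀ i, 0 < Rh i) (hRm : ∀ i, Rh i < Rm i)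
    (i : Fin n) :
    ((t < 1 - v i ∧
        util0 v Rh Rd Rd' Rm t (Function.update (fun _ => true) i false) i = Rd i ∧
        Rd i < Rh i) ∨
      (Vh v (Function.update (fun _ => true) i false) ≤ t ∧
        1 - Vh v (Function.update (fun _ => true) i false) ≤ t ∧
        util0 v Rh Rd Rd' Rm t (Function.update (fun _ => true) i false) i = 0 ∧
        0 < Rh i)) ∧
    util0 v Rh Rd Rd' Rm t (Function.update (fun _ => true) i false) i < Rh i := by
  have hVh : Vh v (Function.update (fun _ => true) i false) = 1 - v i := by
    unfold Vh
    have hkey : ∀ j, (if (Function.update (fun _ => true) i false) j then v j else 0)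
        = v j - (if j = i then v j else 0) := by
      intro j; by_cases hj : j = i <;> simp [hj, Function.update_apply]
    simp only [hkey]
    rw [Finset.sum_sub_distrib, hsum, Finset.sum_ite_eq' Finset.univ i v]
    simp
  have hs : (Function.update (fun _ => true) i false) i = false := by simp
  by_cases h : t < 1 - v i
  · have hu : util0 v Rh Rd Rd' Rm t (Function.update (fun _ => true) i false) i = Rd i := by
      unfold util0
      rw [hs, hVh]
      simp [h]
    exact ⟨Or.inl ⟨h, hu, hRd i⟩, hu ▸ hRd i⟩
  · have h1 : Vh v (Function.update (fun _ => true) i false) ≤ t := by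
      rw [hVh]; linarith [hv i, not_lt.mp h]
    have h2 : 1 - Vh v (Function.update (fun _ => true) i false) ≤ t := by
      rw [hVh]; simp; linarith [hvt i]
    have hu : util0 v Rh Rd Rd' Rm t (Function.update (fun _ => true) i false) i = 0 := by
      unfold util0
      rw [hs, hVh]
      have ha : ¬ t < 1 - v i := h
      have hb : ¬ t < 1 - (1 - v i) := by intro hc; simp at hc; linarith [hvt i]
      simp only [Bool.false_eq_true, if_false]
      rw [if_neg ha, if_neg hb]
    exact ⟨Or.inr ⟨h1, h2, hu, hRh i⟩, hu ▸ hRh i⟩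
end
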